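/- In the abstract id-assignment process without an upper bound on ids (Theorem 3 analogue): a multiset of n ≥ 2 natural numbers, all initially 0, evolves by selecting two equal elements v and replacing one by v + 1. At any reachable state in which the multiset consists of n distinct values, those values are exactly {0, 1, ..., n-1}, and the last step producing this state incremented an element of value n - 2. -/

import Mathlib

/-!
A step never removes a value, since only one of two equal copies changes, and it creates `v + 1`
next to the surviving `v`. Hence the set of values of every reachable state is an initial
segment of `ℕ`, and a reachable state of `n` distinct values is `{0, …, n - 1}`. If the last step
incremented `v < n - 2`, then `v + 2` was already present, hence so was `v + 1` by downward
closure, and the step duplicated `v + 1`.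
-/

/-- One step of the unbounded id-assignment process at value `v`. -/
def IdStepAt (v : ℕ) (M M' : Multiset ℕ) : Prop :=
  2 ≤ M.count v ∧ M' = (v + 1) ::ₘ M.erase v

def IdStep (M M' : Multiset ℕ) : Prop := ∃ v, IdStepAt v M M'

namespace IdStepAt

variable {v a : ℕ} {M M' : Multiset ℕ}

theorem mem_left (h : IdStepAt v M M') : v ∈ M :=
  Multiset.count_pos.1 (by have := h.1; omega)

theorem mem_iff (h : IdStepAt v M M') : a ∈ M' ↔ a = v + 1 ∨ a ∈ M := by
  rw [h.2, Multiset.mem_cons]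
  by_cases hav : a = v
  · subst hav
    have : a ∈ M.erase a := by
      rw [← Multiset.count_pos, Multiset.count_erase_self]; have := h.1; omega
    simp only [this, h.mem_left, or_true]
  · rw [Multiset.mem_erase_of_ne hav]

theorem count_succ (h : IdStepAt v M M') : M'.count (v + 1) = M.count (v + 1) + 1 := by
  rw [h.2, Multiset.count_cons_self, Multiset.count_erase_of_ne (by omega)]

theorem card_eq (h : IdStepAt v M M') : M'.card = M.card := by
  rw [h.2, Multiset.card_cons, Multiset.card_erase_add_one h.mem_left]

theorem isLowerSet (h : IdStepAt v M M') (hM : IsLowerSet {a | a ∈ M}) :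
    IsLowerSet {a | a ∈ M'} := by
  intro a b hba ha
  simp only [Set.mem_ofPred_eq, h.mem_iff] at ha ⊢
  rcases ha with rfl | ha
  · rcases Nat.lt_or_eq_of_le hba with hb | rfl
    · exact Or.inr (hM (Nat.le_of_lt_succ hb) h.mem_left)
    · exact Or.inl rfl
  · exact Or.inr (hM hba ha)

end IdStepAt

theorem card_of_reflTransGen_idStep {n : ℕ} {M : Multiset ℕ}
    (h : Relation.ReflTransGen IdStep (Multiset.replicate n 0) M) : M.card = n := by
  induction h with
  | refl => exact Multiset.card_replicate n 0
  | tail _ hstep ih => obtain ⟨v, hstep⟩ := hstep; exact hstep.card_eq.trans ih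

theorem isLowerSet_of_reflTransGen_idStep {n : ℕ} {M : Multiset ℕ}
    (h : Relation.ReflTransGen IdStep (Multiset.replicate n 0) M) : IsLowerSet {a | a ∈ M} := by
  induction h with
  | refl =>
    intro a b hba ha
    simp only [Set.mem_ofPred_eq, Multiset.mem_replicate] at ha ⊢
    omega
  | tail _ hstep ih => obtain ⟨v, hstep⟩ := hstep; exact hstep.isLowerSet ih

theorem Multiset.eq_range_of_nodup_of_isLowerSet {M : Multiset ℕ} (hnd : M.Nodup)
    (hM : IsLowerSet {a | a ∈ M}) : M = Multiset.range M.card := by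
  have hlt : ∀ a ∈ M, a < M.card := fun a ha => by
    have hle : Multiset.range (a + 1) ≤ M := (Multiset.le_iff_subset (Multiset.nodup_range _)).2
      fun b hb => hM (Nat.le_of_lt_succ (Multiset.mem_range.1 hb)) ha
    simpa using Multiset.card_le_card hle
  exact Multiset.eq_of_le_of_card_le ((Multiset.le_iff_subset hnd).2
    fun a ha => Multiset.mem_range.2 (hlt a ha)) (Multiset.card_range _).le

theorem distinct_ids_iff_range_general (n : ℕ) (Mprev M : Multiset ℕ) (v : ℕ)
    (hreach : Relation.ReflTransGen IdStep (Multiset.replicate n 0) Mprev)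
    (hstep : IdStepAt v Mprev M)
    (hnodup : M.Nodup) :
    M = Multiset.range n ∧ v = n - 2 := by
  have hlower := isLowerSet_of_reflTransGen_idStep hreach
  have hM : M = Multiset.range n := by
    rw [← card_of_reflTransGen_idStep hreach, ← hstep.card_eq]
    exact Multiset.eq_range_of_nodup_of_isLowerSet hnodup (hstep.isLowerSet hlower)
  refine ⟨hM, ?_⟩
  have hv : v + 1 < n := Multiset.mem_range.1 (hM ▸ hstep.mem_iff.2 (Or.inl rfl))
  have hfresh : v + 1 ∉ Mprev := by
    have hle := Multiset.nodup_iff_count_le_one.1 hnodup (v + 1)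
    rw [hstep.count_succ] at hle
    rw [← Multiset.count_eq_zero]
    omega
  have hlast : ¬ v + 2 < n := fun h => by
    have hprev : v + 2 ∈ Mprev :=
      (hstep.mem_iff.1 (hM ▸ Multiset.mem_range.2 h)).resolve_left (by omega)
    exact hfresh (hlower (Nat.le_succ _) hprev)
  omega

theorem distinct_ids_iff_range (n : ℕ) (hn : 2 ≤ n) (Mprev M : Multiset ℕ) (v : ℕ)
    (hreach : Relation.ReflTransGen IdStep (Multiset.replicate n 0) Mprev)
    (hstep : IdStepAt v Mprev M)
    (hnodup : M.Nodup) :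
    M = Multiset.range n ∧ v = n - 2 :=
  distinct_ids_iff_range_general n Mprev M v hreach hstep hnodup
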